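/- For every integer r ≥ 1, the sum over n from 2 to infinity of H_{n−1}·h_{n+1}^{(r)}/(n·C(n+r, r)) equals 1 + H_r + (H_r² + H_r^{(2)})/2. -/
import Mathlib


open Finset Real

noncomputable def H (n : ℕ) : ℝ := ∑ i ∈ Finset.range n, 1/((i:ℝ)+1)

noncomputable def H2 (n : ℕ) : ℝ := ∑ i ∈ Finset.range n, 1/((i:ℝ)+1)^2

noncomputable def H3 (n : ℕ) : ℝ := ∑ i ∈ Finset.range n, 1/((i:ℝ)+1)^3

noncomputable def hh (r n : ℕ) : ℝ := (Nat.choose (n+r-1) (r-1)) * (H (n+r-1) - H (r-1))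

noncomputable def zeta3 : ℝ := ∑' n : ℕ, 1/((n:ℝ)+1)^3

lemma H_succ (k : ℕ) : H (k+1) = H k + 1/((k:ℝ)+1) := by
  rw [H, Finset.sum_range_succ, ← H]

lemma H_add (a k : ℕ) : H (a + k) = H a + ∑ i ∈ Finset.range k, 1/((a:ℝ)+(i:ℝ)+1) := by
  rw [H, H, Finset.sum_range_add]
  congr 1
  apply Finset.sum_congr rfl
  intro i _
  push_cast
  ring

lemma H_nonneg (n : ℕ) : 0 ≤ H n := by
  apply Finset.sum_nonneg; intro i _; positivity

lemma H_mono : Monotone H := by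
  intro a b hab
  obtain ⟨k, rfl⟩ := Nat.exists_eq_add_of_le hab
  rw [H_add]
  have : 0 ≤ ∑ i ∈ Finset.range k, 1/((a:ℝ)+(i:ℝ)+1) := by
    apply Finset.sum_nonneg; intro i _; positivity
  linarith

lemma H_diff_le (a k : ℕ) : H (a + k) - H a ≤ (k:ℝ) / ((a:ℝ)+1) := by
  rw [H_add]
  have : ∑ i ∈ Finset.range k, 1/((a:ℝ)+(i:ℝ)+1) ≤ ∑ _i ∈ Finset.range k, 1/((a:ℝ)+1) := by
    apply Finset.sum_le_sum; intro i _
    apply one_div_le_one_div_of_le (by positivity)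
    have : (0:ℝ) ≤ (i:ℝ) := by positivity
    linarith
  simp only [Finset.sum_const, Finset.card_range, nsmul_eq_mul] at this
  rw [div_eq_mul_one_div]
  linarith

lemma H_le_log (n : ℕ) : H n ≤ 1 + Real.log n := by
  have h := harmonic_le_one_add_log n
  have hH : H n = ((harmonic n : ℚ):ℝ) := by
    rw [H, harmonic]; push_cast; simp [one_div]
  linarith [hH ▸ h]

noncomputable def cc (r n : ℕ) : ℝ :=
  ∑ t ∈ Finset.range r, (H (n+t+3) - H (n+1)) / ((t:ℝ)+2)

noncomputable def aa (r n : ℕ) : ℝ :=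
  (r:ℝ) * (H (n+1) * (H (n+2+r) - H (r-1)) / ((n:ℝ)+2))
  + (r:ℝ) * ((H (n+3+r) - H (r-1)) / ((n:ℝ)+2))
  + (r:ℝ) * ((H (n+3+r) - H (n+2)) / ((r:ℝ)+1))
  + H (n+1) * (H (n+2+r) - H (n+2))
  + cc r n

lemma ccdiff (r n : ℕ) : cc r n = cc r (n+1) + (H (n+3+r) - H (n+3)) / ((n:ℝ)+2) := by
  have hd : H (n+3+r) - H (n+3) = ∑ i ∈ Finset.range r, 1/((n:ℝ)+(i:ℝ)+4) := by
    rw [show n+3+r = (n+3)+r by ring, H_add]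
    push_cast
    rw [add_sub_cancel_left]
    apply Finset.sum_congr rfl
    intro i _
    ring
  rw [cc, cc, hd, Finset.sum_div, ← Finset.sum_add_distrib]
  apply Finset.sum_congr rfl
  intro t _
  have h1 : H (n+1+t+3) = H (n+t+3) + 1/((n:ℝ)+(t:ℝ)+4) := by
    rw [show n+1+t+3 = (n+t+3)+1 by ring, H_succ]; push_cast; ring_nf
  have h2 : H (n+1+1) = H (n+1) + 1/((n:ℝ)+2) := by
    rw [H_succ]; push_cast; ring_nf
  rw [h1, h2]
  have hx2 : ((n:ℝ)+2) ≠ 0 := by positivity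
  have hx4 : ((n:ℝ)+(t:ℝ)+4) ≠ 0 := by positivity
  have ht2 : ((t:ℝ)+2) ≠ 0 := by positivity
  field_simp
  ring

lemma tele1 (r n : ℕ) :
    (r:ℝ) * (H (n+1) * (H (n+2+r) - H (r-1)) / ((n:ℝ)+2))
      - (r:ℝ) * (H (n+2) * (H (n+3+r) - H (r-1)) / ((n:ℝ)+3))
    = (r:ℝ) * (H (n+1) * (H (n+2+r) - H (r-1))) / (((n:ℝ)+2)*((n:ℝ)+3))
      - (r:ℝ) * (H (n+3+r) - H (r-1)) / (((n:ℝ)+2)*((n:ℝ)+3))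
      - (r:ℝ) * H (n+1) / (((n:ℝ)+3)*((n:ℝ)+(r:ℝ)+3)) := by
  have hB1 : H (n+3+r) = H (n+2+r) + 1/((n:ℝ)+(r:ℝ)+3) := by
    rw [show n+3+r = (n+2+r)+1 by ring, H_succ]; push_cast; ring_nf
  have hC : H (n+2) = H (n+1) + 1/((n:ℝ)+2) := by
    rw [show n+2 = (n+1)+1 by ring, H_succ]; push_cast; ring_nf
  rw [hB1, hC]
  have hx2 : ((n:ℝ)+2) ≠ 0 := by positivity
  have hx3 : ((n:ℝ)+3) ≠ 0 := by positivity
  have hxr3 : ((n:ℝ)+(r:ℝ)+3) ≠ 0 := by positivity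
  field_simp
  ring

lemma tele2 (r n : ℕ) :
    ((r:ℝ) * ((H (n+3+r) - H (r-1)) / ((n:ℝ)+2)) + (r:ℝ) * ((H (n+3+r) - H (n+2)) / ((r:ℝ)+1)))
      - ((r:ℝ) * ((H (n+4+r) - H (r-1)) / ((n:ℝ)+3)) + (r:ℝ) * ((H (n+4+r) - H (n+3)) / ((r:ℝ)+1)))
    = (r:ℝ) * (H (n+3+r) - H (r-1)) / (((n:ℝ)+2)*((n:ℝ)+3)) := by
  have hB2 : H (n+4+r) = H (n+3+r) + 1/((n:ℝ)+(r:ℝ)+4) := by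
    rw [show n+4+r = (n+3+r)+1 by ring, H_succ]; push_cast; ring_nf
  have hD : H (n+3) = H (n+2) + 1/((n:ℝ)+3) := by
    rw [show n+3 = (n+2)+1 by ring, H_succ]; push_cast; ring_nf
  rw [hB2, hD]
  have hx2 : ((n:ℝ)+2) ≠ 0 := by positivity
  have hx3 : ((n:ℝ)+3) ≠ 0 := by positivity
  have hr1 : ((r:ℝ)+1) ≠ 0 := by positivity
  have hxr4 : ((n:ℝ)+(r:ℝ)+4) ≠ 0 := by positivity
  field_simp
  ring

lemma tele3 (r n : ℕ) :
    (H (n+1) * (H (n+2+r) - H (n+2)) + cc r n)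
      - (H (n+2) * (H (n+3+r) - H (n+3)) + cc r (n+1))
    = (r:ℝ) * H (n+1) / (((n:ℝ)+3)*((n:ℝ)+(r:ℝ)+3)) := by
  rw [ccdiff r n]
  have hB1 : H (n+3+r) = H (n+2+r) + 1/((n:ℝ)+(r:ℝ)+3) := by
    rw [show n+3+r = (n+2+r)+1 by ring, H_succ]; push_cast; ring_nf
  have hD : H (n+3) = H (n+2) + 1/((n:ℝ)+3) := by
    rw [show n+3 = (n+2)+1 by ring, H_succ]; push_cast; ring_nf
  have hC : H (n+2) = H (n+1) + 1/((n:ℝ)+2) := by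
    rw [show n+2 = (n+1)+1 by ring, H_succ]; push_cast; ring_nf
  rw [hB1, hD, hC]
  have hx2 : ((n:ℝ)+2) ≠ 0 := by positivity
  have hx3 : ((n:ℝ)+3) ≠ 0 := by positivity
  have hxr3 : ((n:ℝ)+(r:ℝ)+3) ≠ 0 := by positivity
  field_simp
  ring

lemma telescope (r n : ℕ) :
    aa r n - aa r (n+1)
      = (r:ℝ) * (H (n+1) * (H (n+2+r) - H (r-1))) / (((n:ℝ)+2)*((n:ℝ)+3)) := by
  have h1 := tele1 r n
  have h2 := tele2 r n
  have h3 := tele3 r n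
  rw [aa, aa]
  simp only [show n+1+2+r = n+3+r by ring, show n+1+3+r = n+4+r by ring,
    show n+1+2 = n+3 by ring, show n+1+1 = n+2 by ring]
  push_cast
  linear_combination h1 + h2 + h3

lemma H2_succ (k : ℕ) : H2 (k+1) = H2 k + 1/((k:ℝ)+1)^2 := by
  rw [H2, Finset.sum_range_succ, ← H2]

lemma base (r : ℕ) (hr : 1 ≤ r) : aa r 0 = 1 + H r + ((H r)^2 + H2 r)/2 := by
  induction r, hr using Nat.le_induction with
  | base => norm_num [aa, cc, H, H2, Finset.sum_range_succ]
  | succ r hr ih =>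
    have hpred : H (r-1) = H r - 1/(r:ℝ) := by
      obtain ⟨k, rfl⟩ : ∃ k, r = k+1 := ⟨r-1, by omega⟩
      rw [Nat.add_sub_cancel, H_succ]
      push_cast
      ring
    have h1 : H (r+1) = H r + 1/((r:ℝ)+1) := by rw [H_succ]
    have h2 : H (r+2) = H (r+1) + 1/((r:ℝ)+2) := by
      rw [show r+2 = (r+1)+1 by ring, H_succ]; push_cast; ring_nf
    have h3 : H (r+3) = H (r+2) + 1/((r:ℝ)+3) := by
      rw [show r+3 = (r+2)+1 by ring, H_succ]; push_cast; ring_nf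
    have h4 : H (r+4) = H (r+3) + 1/((r:ℝ)+4) := by
      rw [show r+4 = (r+3)+1 by ring, H_succ]; push_cast; ring_nf
    have hcc : cc (r+1) 0 = cc r 0 + (H (r+3) - H 1)/((r:ℝ)+2) := by
      rw [cc, cc, Finset.sum_range_succ]
      norm_num
    rw [aa] at ih
    simp only [show 0+2+r = r+2 by ring, show 0+3+r = r+3 by ring] at ih
    norm_num at ih
    rw [aa, hcc]
    simp only [show 0+2+(r+1) = r+3 by ring, show 0+3+(r+1) = r+4 by ring,
      Nat.add_sub_cancel]
    norm_num
    -- extract cc r 0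
    have hcc0 : cc r 0 = (1 + H r + ((H r)^2 + H2 r)/2)
        - ((r:ℝ) * (H 1 * (H (r+2) - H (r-1)) / 2)
          + (r:ℝ) * ((H (r+3) - H (r-1)) / 2)
          + (r:ℝ) * ((H (r+3) - H 2) / ((r:ℝ)+1))
          + H 1 * (H (r+2) - H 2)) := by linarith [ih]
    rw [hcc0, H2_succ]
    have hH1 : H 1 = 1 := by norm_num [H]
    have hH2v : H 2 = 3/2 := by norm_num [H, Finset.sum_range_succ]
    rw [h4, h3, h2, h1, hpred, hH1, hH2v]
    have hr0 : ((r:ℝ)) ≠ 0 := by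
      have : (0:ℝ) < r := by exact_mod_cast hr
      linarith
    have hr1 : ((r:ℝ)+1) ≠ 0 := by positivity
    have hr2 : ((r:ℝ)+2) ≠ 0 := by positivity
    have hr3 : ((r:ℝ)+3) ≠ 0 := by positivity
    have hr4 : ((r:ℝ)+4) ≠ 0 := by positivity
    push_cast
    field_simp
    ring

lemma H_le_L (r n k : ℕ) (hk : k ≤ n+3+r) :
    H k ≤ (1 + Real.log ((r:ℝ)+2)) + Real.log ((n:ℝ)+2) := by
  have h1 : H k ≤ 1 + Real.log k := H_le_log k
  have h2 : Real.log k ≤ Real.log ((n:ℝ)+3+(r:ℝ)) := by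
    rcases Nat.eq_zero_or_pos k with hk0 | hk0
    · subst hk0
      simp only [Nat.cast_zero, Real.log_zero]
      apply Real.log_nonneg; push_cast; linarith
    · apply Real.log_le_log (by exact_mod_cast hk0)
      push_cast
      exact_mod_cast Nat.cast_le.mpr hk
  have h3 : Real.log ((n:ℝ)+3+(r:ℝ)) ≤ Real.log (((r:ℝ)+2) * ((n:ℝ)+2)) := by
    apply Real.log_le_log (by positivity)
    nlinarith [Nat.cast_nonneg (α := ℝ) n, Nat.cast_nonneg (α := ℝ) r]
  rw [Real.log_mul (by positivity) (by positivity)] at h3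
  linarith

lemma cc_nonneg (r n : ℕ) : 0 ≤ cc r n := by
  apply Finset.sum_nonneg
  intro t _
  apply div_nonneg _ (by positivity)
  have : n+1 ≤ n+t+3 := by omega
  linarith [H_mono this]

lemma cc_le (r n : ℕ) : cc r n ≤ (r:ℝ) / ((n:ℝ)+2) := by
  have : cc r n ≤ ∑ _t ∈ Finset.range r, 1/((n:ℝ)+2) := by
    apply Finset.sum_le_sum
    intro t _
    have h1 : H (n+t+3) - H (n+1) ≤ ((t:ℝ)+2) / ((n:ℝ)+2) := by
      have h := H_diff_le (n+1) (t+2)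
      rw [show (n+1)+(t+2) = n+t+3 by ring] at h
      push_cast at h
      rw [show ((n:ℝ)+1+1) = (n:ℝ)+2 by ring] at h
      exact_mod_cast h
    rw [div_le_div_iff₀ (by positivity) (by positivity)]
    calc (H (n+t+3) - H (n+1)) * ((n:ℝ)+2) ≤ (((t:ℝ)+2)/((n:ℝ)+2)) * ((n:ℝ)+2) := by
          apply mul_le_mul_of_nonneg_right h1 (by positivity)
      _ = (t:ℝ)+2 := by field_simp
      _ = 1 * ((t:ℝ)+2) := by ring
  simp only [Finset.sum_const, Finset.card_range, nsmul_eq_mul] at this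
  calc cc r n ≤ (r:ℕ) * (1/((n:ℝ)+2)) := this
    _ = (r:ℝ)/((n:ℝ)+2) := by rw [mul_one_div]

lemma aa_nonneg (r n : ℕ) : 0 ≤ aa r n := by
  rw [aa]
  have h1 : H (r-1) ≤ H (n+2+r) := H_mono (by omega)
  have h2 : H (r-1) ≤ H (n+3+r) := H_mono (by omega)
  have h3 : H (n+2) ≤ H (n+3+r) := H_mono (by omega)
  have h4 : H (n+2) ≤ H (n+2+r) := H_mono (by omega)
  have h5 := H_nonneg (n+1)
  have h6 := cc_nonneg r n
  have hr0 : (0:ℝ) ≤ (r:ℝ) := Nat.cast_nonneg r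
  have c1 : (0:ℝ) ≤ (r:ℝ) * (H (n+1) * (H (n+2+r) - H (r-1)) / ((n:ℝ)+2)) := by
    apply mul_nonneg hr0
    apply div_nonneg (mul_nonneg h5 (by linarith)) (by positivity)
  have c2 : (0:ℝ) ≤ (r:ℝ) * ((H (n+3+r) - H (r-1)) / ((n:ℝ)+2)) := by
    apply mul_nonneg hr0
    apply div_nonneg
    · linarith
    · positivity
  have c3 : (0:ℝ) ≤ (r:ℝ) * ((H (n+3+r) - H (n+2)) / ((r:ℝ)+1)) := by
    apply mul_nonneg hr0
    apply div_nonneg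
    · linarith
    · positivity
  have c4 : (0:ℝ) ≤ H (n+1) * (H (n+2+r) - H (n+2)) :=
    mul_nonneg h5 (by linarith)
  linarith

set_option maxHeartbeats 2000000 in
lemma aa_le (r n : ℕ) :
    aa r n ≤ 5*((r:ℝ)+1) * ((1 + Real.log ((r:ℝ)+2)) + Real.log ((n:ℝ)+2))^2 / ((n:ℝ)+2) := by
  set L : ℝ := (1 + Real.log ((r:ℝ)+2)) + Real.log ((n:ℝ)+2) with hL
  have hL1 : 1 ≤ L := by
    have h1 := Real.log_nonneg (show (1:ℝ) ≤ (r:ℝ)+2 by have := Nat.cast_nonneg (α := ℝ) r; linarith)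
    have h2 := Real.log_nonneg (show (1:ℝ) ≤ (n:ℝ)+2 by have := Nat.cast_nonneg (α := ℝ) n; linarith)
    simp only [hL]; linarith
  have hL0 : (0:ℝ) ≤ L := by linarith
  have hx2 : (0:ℝ) < (n:ℝ)+2 := by positivity
  have hx3 : (0:ℝ) < (n:ℝ)+3 := by positivity
  have hr1 : (0:ℝ) < (r:ℝ)+1 := by positivity
  have hr0 : (0:ℝ) ≤ (r:ℝ) := Nat.cast_nonneg r
  have hA : H (n+1) ≤ L := H_le_L r n _ (by omega)
  have hA0 := H_nonneg (n+1)
  have hB0 : 0 ≤ H (n+2+r) - H (r-1) := by linarith [H_mono (show r-1 ≤ n+2+r by omega)]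
  have hB : H (n+2+r) - H (r-1) ≤ L := by
    have := H_le_L r n (n+2+r) (by omega)
    have := H_nonneg (r-1)
    linarith
  have hB' : H (n+3+r) - H (r-1) ≤ L := by
    have := H_le_L r n (n+3+r) (by omega)
    have := H_nonneg (r-1)
    linarith
  have hB0' : 0 ≤ H (n+3+r) - H (r-1) := by linarith [H_mono (show r-1 ≤ n+3+r by omega)]
  have hd3 : H (n+3+r) - H (n+2) ≤ ((r:ℝ)+1) / ((n:ℝ)+3) := by
    have h := H_diff_le (n+2) (r+1)
    rw [show (n+2)+(r+1) = n+3+r by ring] at h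
    push_cast at h
    rw [show ((n:ℝ)+2+1) = (n:ℝ)+3 by ring] at h
    exact_mod_cast h
  have hd30 : 0 ≤ H (n+3+r) - H (n+2) := by linarith [H_mono (show n+2 ≤ n+3+r by omega)]
  have hd4 : H (n+2+r) - H (n+2) ≤ (r:ℝ) / ((n:ℝ)+3) := by
    have h := H_diff_le (n+2) r
    rw [show (n+2)+r = n+2+r by rfl] at h
    push_cast at h
    rw [show ((n:ℝ)+2+1) = (n:ℝ)+3 by ring] at h
    exact_mod_cast h
  have hd40 : 0 ≤ H (n+2+r) - H (n+2) := by linarith [H_mono (show n+2 ≤ n+2+r by omega)]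
  have hccle := cc_le r n
  -- component bounds
  have c1 : (r:ℝ) * (H (n+1) * (H (n+2+r) - H (r-1)) / ((n:ℝ)+2))
      ≤ (r:ℝ) * ((L*L)/((n:ℝ)+2)) := by
    gcongr
  have hBB : H (n+3+r) - H (r-1) ≤ L*L := by nlinarith
  have c2 : (r:ℝ) * ((H (n+3+r) - H (r-1)) / ((n:ℝ)+2))
      ≤ (r:ℝ) * ((L*L)/((n:ℝ)+2)) := by
    gcongr
  have hd3' : H (n+3+r) - H (n+2) ≤ ((r:ℝ)+1) / ((n:ℝ)+2) := by
    have : ((r:ℝ)+1)/((n:ℝ)+3) ≤ ((r:ℝ)+1)/((n:ℝ)+2) := by gcongr <;> linarith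
    linarith
  have c3 : (r:ℝ) * ((H (n+3+r) - H (n+2)) / ((r:ℝ)+1))
      ≤ (r:ℝ) * ((((r:ℝ)+1)/((n:ℝ)+2)) / ((r:ℝ)+1)) := by
    gcongr
  have c3' : (r:ℝ) * ((((r:ℝ)+1)/((n:ℝ)+2)) / ((r:ℝ)+1)) = (r:ℝ)/((n:ℝ)+2) := by
    field_simp
  have hd4' : H (n+2+r) - H (n+2) ≤ (r:ℝ) / ((n:ℝ)+2) := by
    have : ((r:ℝ))/((n:ℝ)+3) ≤ ((r:ℝ))/((n:ℝ)+2) := by gcongr <;> linarith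
    linarith
  have c4 : H (n+1) * (H (n+2+r) - H (n+2)) ≤ L * ((r:ℝ)/((n:ℝ)+2)) := by
    gcongr
  have total : aa r n ≤ (r:ℝ) * ((L*L)/((n:ℝ)+2)) + (r:ℝ) * ((L*L)/((n:ℝ)+2))
      + (r:ℝ)/((n:ℝ)+2) + L * ((r:ℝ)/((n:ℝ)+2)) + (r:ℝ)/((n:ℝ)+2) := by
    rw [aa]
    have c3'' := c3.trans (le_of_eq c3')
    linarith [hccle]
  have e1 : (0:ℝ) ≤ (r:ℝ)*(L*L-1) := mul_nonneg hr0 (by nlinarith [hL1])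
  have e2 : (0:ℝ) ≤ (r:ℝ)*(L*L-L) := mul_nonneg hr0 (by nlinarith [hL1, hL0])
  have e3 : (0:ℝ) ≤ L*L := mul_nonneg hL0 hL0
  calc aa r n ≤ (r:ℝ) * ((L*L)/((n:ℝ)+2)) + (r:ℝ) * ((L*L)/((n:ℝ)+2))
      + (r:ℝ)/((n:ℝ)+2) + L * ((r:ℝ)/((n:ℝ)+2)) + (r:ℝ)/((n:ℝ)+2) := total
    _ = (2*(r:ℝ)*(L*L) + 2*(r:ℝ) + L*(r:ℝ)) / ((n:ℝ)+2) := by ring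
    _ ≤ (5*((r:ℝ)+1) * L^2) / ((n:ℝ)+2) := by
        gcongr (?_ : ℝ) / _
        nlinarith [e1, e2, e3]
    _ = 5*((r:ℝ)+1) * L^2 / ((n:ℝ)+2) := by ring

lemma aa_tendsto (r : ℕ) : Filter.Tendsto (fun n => aa r n) Filter.atTop (nhds 0) := by
  set c : ℝ := 1 + Real.log ((r:ℝ)+2) with hc
  have hψ : Filter.Tendsto (fun x:ℝ => (c + Real.log x)^2 / x) Filter.atTop (nhds 0) := by
    have t0 : Filter.Tendsto (fun x:ℝ => c^2 * x⁻¹) Filter.atTop (nhds 0) := by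
      simpa using (tendsto_inv_atTop_zero (𝕜 := ℝ)).const_mul (c^2)
    have t1 := Real.tendsto_pow_log_div_mul_add_atTop 1 0 1 one_ne_zero
    have t2 := Real.tendsto_pow_log_div_mul_add_atTop 1 0 2 one_ne_zero
    have tsum' := (t0.add ((t1.const_mul (2*c)).add t2))
    have : (0:ℝ) = 0 + (2*c*0 + 0) := by ring
    rw [this]
    apply Filter.Tendsto.congr' _ tsum'
    filter_upwards [Filter.eventually_gt_atTop (0:ℝ)] with x hx
    have hx0 : x ≠ 0 := ne_of_gt hx
    field_simp
    ring
  have hcomp : Filter.Tendsto (fun n:ℕ => ((n:ℝ)+2)) Filter.atTop Filter.atTop :=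
    Filter.tendsto_atTop_add_const_right _ 2 tendsto_natCast_atTop_atTop
  have hb : Filter.Tendsto
      (fun n:ℕ => 5*((r:ℝ)+1) * ((1 + Real.log ((r:ℝ)+2)) + Real.log ((n:ℝ)+2))^2 / ((n:ℝ)+2))
      Filter.atTop (nhds 0) := by
    have h := (hψ.comp hcomp).const_mul (5*((r:ℝ)+1))
    simp only [mul_zero] at h
    apply h.congr
    intro n
    simp only [Function.comp]
    ring
  exact squeeze_zero (fun n => aa_nonneg r n) (fun n => aa_le r n) hb


theorem stmt13 (r : ℕ) (hr : 1 ≤ r) :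
    ∑' n : ℕ, H (n+1) * hh r (n+3) / (((n:ℝ)+2) * (Nat.choose (n+2+r) r : ℝ))
      = 1 + H r + ((H r)^2 + H2 r) / 2 := by
  have hf' : ∀ n : ℕ, H (n+1) * hh r (n+3) / (((n:ℝ)+2) * (Nat.choose (n+2+r) r : ℝ))
      = (r:ℝ) * (H (n+1) * (H (n+2+r) - H (r-1))) / (((n:ℝ)+2)*((n:ℝ)+3)) := by
    intro n
    rw [hh, show n+3+r-1 = n+2+r by omega]
    have hch : ((Nat.choose (n+2+r) r : ℕ) : ℝ) * r
        = ((Nat.choose (n+2+r) (r-1) : ℕ) : ℝ) * ((n:ℝ)+3) := by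
      have h := Nat.choose_succ_right_eq (n+2+r) (r-1)
      rw [show r-1+1 = r by omega, show (n+2+r) - (r-1) = n+3 by omega] at h
      exact_mod_cast h
    have hch0 : (0:ℝ) < ((Nat.choose (n+2+r) r : ℕ) : ℝ) := by
      exact_mod_cast Nat.choose_pos (by omega)
    rw [div_eq_div_iff (by positivity) (by positivity)]
    push_cast
    linear_combination (-(H (n+1) * (H (n+2+r) - H (r-1)) * ((n:ℝ)+2))) * hch
  have hnonneg : ∀ n : ℕ,
      0 ≤ H (n+1) * hh r (n+3) / (((n:ℝ)+2) * (Nat.choose (n+2+r) r : ℝ)) := by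
    intro n
    rw [hf' n]
    have h1 := H_nonneg (n+1)
    have h2 : H (r-1) ≤ H (n+2+r) := H_mono (by omega)
    apply div_nonneg _ (by positivity)
    apply mul_nonneg (Nat.cast_nonneg r)
    exact mul_nonneg h1 (by linarith)
  have hf : ∀ n : ℕ, H (n+1) * hh r (n+3) / (((n:ℝ)+2) * (Nat.choose (n+2+r) r : ℝ))
      = aa r n - aa r (n+1) := by
    intro n; rw [hf' n, telescope]
  have hsum : HasSum (fun n : ℕ => H (n+1) * hh r (n+3) / (((n:ℝ)+2) * (Nat.choose (n+2+r) r : ℝ)))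
      (aa r 0) := by
    rw [hasSum_iff_tendsto_nat_of_nonneg hnonneg]
    have hpart : ∀ N : ℕ, ∑ i ∈ Finset.range N,
        H (i+1) * hh r (i+3) / (((i:ℝ)+2) * (Nat.choose (i+2+r) r : ℝ)) = aa r 0 - aa r N := by
      intro N
      rw [Finset.sum_congr rfl (fun i _ => hf i)]
      exact Finset.sum_range_sub' (fun i => aa r i) N
    apply Filter.Tendsto.congr (fun N => (hpart N).symm)
    simpa using (tendsto_const_nhds (x := aa r 0)).sub (aa_tendsto r)
  rw [hsum.tsum_eq, base r hr]
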